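/- arXiv:2402.02261 — 2 statements merged into one kernel-verified Lean document; each statement's English description precedes it below -/
import Mathlib

section
/- Let A be a ring and M an (A,A)-bimodule. The trivial extension A ⋉ M (the ring whose underlying additive group is A × M with multiplication (a,m)(a',m') = (aa', am' + ma')) is strongly unit nil-clean if and only if A is strongly unit nil-clean. -/
/-- An element `x` of a ring is *strongly nil-clean* if `x = e + b` where `e` is an
idempotent, `b` is nilpotent, and `e` and `b` commute. -/
def IsStronglyNilClean {R : Type*} [Ring R] (x : R) : Prop :=
  ∃ e b : R, IsIdempotentElem e ∧ IsNilpotent b ∧ e * b = b * e ∧ x = e + b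

/-- A ring `R` is *strongly unit nil-clean* if for every `x : R` there is a unit `u`
such that `u * x` is strongly nil-clean. -/
def StronglyUnitNilClean (R : Type*) [Ring R] : Prop :=
  ∀ x : R, ∃ u : Rˣ, IsStronglyNilClean ((u : R) * x)

/-- A ring `R` is *unit-regular* if every `a : R` satisfies `a = a * u * a` for some unit `u`. -/
def UnitRegular (R : Type*) [Ring R] : Prop :=
  ∀ a : R, ∃ u : Rˣ, a = a * (u : R) * a

/-- A group is *locally finite* if every finitely generated subgroup is finite. -/
def LocallyFiniteGroup (G : Type*) [Group G] : Prop :=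
  ∀ H : Subgroup G, H.FG → (H : Set G).Finite

/-- A subset `T` of a ring is *nilpotent* if there is `n ≥ 1` such that every product of
`n` elements of `T` is zero. -/
def IsNilpotentSubset {R : Type*} [Ring R] (T : Set R) : Prop :=
  ∃ n : ℕ, 0 < n ∧ ∀ l : List R, (∀ a ∈ l, a ∈ T) → l.length = n → l.prod = 0

/-- A subset `S` of a ring is *locally nilpotent* if the non-unital subring generated by
any finite subset of `S` is nilpotent. -/
def IsLocallyNilpotentSet {R : Type*} [Ring R] (S : Set R) : Prop :=
  ∀ F : Finset R, (F : Set R) ⊆ S →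
    IsNilpotentSubset ((NonUnitalSubring.closure (F : Set R) : Set R))

/-- A ring is *NI* if the set of nilpotent elements forms a two-sided ideal. -/
def IsNIRing (R : Type*) [Ring R] : Prop :=
  ∃ I : TwoSidedIdeal R, ∀ x : R, x ∈ I ↔ IsNilpotent x

/-- A ring is *weakly 2-primal* if its set of nilpotent elements is a two-sided ideal
which is moreover locally nilpotent. -/
def Weakly2Primal (R : Type*) [Ring R] : Prop :=
  IsNIRing R ∧ IsLocallyNilpotentSet {x : R | IsNilpotent x}

/-! An element `x` is strongly nil-clean exactly when `x - x ^ 2` is nilpotent: for the converse,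
if `(x - x ^ 2) ^ n = 0` then `1 - (1 - x ^ n) ^ n` is an idempotent polynomial in `x` which differs
from `x` by a multiple of `x ^ 2 - x`. Hence strong nil-cleanness can be read off modulo a
nil ideal, units lift along a surjection with nil kernel, and the projection `A ⋉ M → A`,
whose kernel `0 ⋉ M` squares to zero, transfers strong unit nil-cleanness both ways. -/

open Polynomial

section StronglyNilClean

variable {R : Type*} [Ring R]

lemma Polynomial.commute_aeval_aeval (x : R) (p q : ℤ[X]) : Commute (aeval x p) (aeval x q) := by
  simp only [Commute, SemiconjBy, ← map_mul, mul_comm]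

lemma X_sq_sub_X_dvd_X_sub_one_sub_one_sub_X_pow_pow {n : ℕ} (hn : n ≠ 0) :
    (X ^ 2 - X : ℤ[X]) ∣ X - (1 - (1 - X ^ n) ^ n) := by
  have hcop : IsCoprime (X - C 0 : ℤ[X]) (X - C 1) := ⟨1, -1, by simp⟩
  rw [show (X ^ 2 - X : ℤ[X]) = (X - C 0) * (X - C 1) by simp; ring]
  exact hcop.mul_dvd (dvd_iff_isRoot.mpr (by simp [hn])) (dvd_iff_isRoot.mpr (by simp [hn]))

lemma IsStronglyNilClean.isNilpotent_sub_sq {x : R} (hx : IsStronglyNilClean x) :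
    IsNilpotent (x - x ^ 2) := by
  obtain ⟨e, b, he, hb, heb, rfl⟩ := hx
  have hcomm : Commute e b := heb
  have hfactor : (e + b) - (e + b) ^ 2 = b * (1 - 2 * e - b) := by
    rw [sq, add_mul, mul_add, mul_add, he.eq, heb]
    noncomm_ring
  rw [hfactor]
  have hcomm' : Commute b (1 - 2 * e - b) :=
    ((Commute.one_right b).sub_right ((Commute.ofNat_right b 2).mul_right hcomm.symm)).sub_right
      (Commute.refl b)
  exact hcomm'.isNilpotent_mul_right hb

lemma isStronglyNilClean_of_isNilpotent_sub_sq {x : R} (hx : IsNilpotent (x - x ^ 2)) :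
    IsStronglyNilClean x := by
  obtain ⟨n, hn⟩ := hx
  have hn' : (x - x ^ 2) ^ (n + 1) = 0 := by rw [pow_succ, hn, zero_mul]
  obtain ⟨c, hc⟩ := X_sq_sub_X_dvd_X_sub_one_sub_one_sub_X_pow_pow n.succ_ne_zero
  have hxe := congrArg (aeval x) hc
  have hex := commute_aeval_aeval x (1 - (1 - X ^ (n + 1)) ^ (n + 1)) X
  have hcx := commute_aeval_aeval x (X ^ 2 - X) c
  simp only [map_sub, map_one, map_mul, map_pow, aeval_X] at hxe hex hcx
  refine ⟨_, _, isIdempotentElem_one_sub_one_sub_pow_pow x _ hn', ?_,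
    (hex.sub_right (Commute.refl _)).eq, (add_sub_cancel _ x).symm⟩
  rw [hxe]
  refine hcx.isNilpotent_mul_right ⟨n + 1, ?_⟩
  rw [← neg_sub, neg_pow, hn', mul_zero]

theorem isStronglyNilClean_iff_isNilpotent_sub_sq {x : R} :
    IsStronglyNilClean x ↔ IsNilpotent (x - x ^ 2) :=
  ⟨IsStronglyNilClean.isNilpotent_sub_sq, isStronglyNilClean_of_isNilpotent_sub_sq⟩

end StronglyNilClean

section RingHom

variable {R S : Type*} [Ring R] [Ring S] (f : R →+* S)

lemma IsStronglyNilClean.map {x : R} (hx : IsStronglyNilClean x) : IsStronglyNilClean (f x) := by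
  obtain ⟨e, b, he, hb, heb, rfl⟩ := hx
  exact ⟨f e, f b, he.map f, hb.map f, by rw [← map_mul, heb, map_mul], map_add f e b⟩

lemma isNilpotent_of_isNilpotent_map_of_ker_isNilpotent
    (hf : ∀ x ∈ RingHom.ker f, IsNilpotent x) {x : R} (hx : IsNilpotent (f x)) :
    IsNilpotent x := by
  obtain ⟨n, hn⟩ := hx
  obtain ⟨m, hm⟩ := hf (x ^ n) (by rwa [RingHom.mem_ker, map_pow])
  exact ⟨n * m, by rwa [pow_mul]⟩

lemma isStronglyNilClean_of_map_of_ker_isNilpotent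
    (hf : ∀ x ∈ RingHom.ker f, IsNilpotent x) {x : R} (hx : IsStronglyNilClean (f x)) :
    IsStronglyNilClean x := by
  rw [isStronglyNilClean_iff_isNilpotent_sub_sq] at hx ⊢
  exact isNilpotent_of_isNilpotent_map_of_ker_isNilpotent f hf (by rwa [map_sub, map_pow])

lemma isUnit_of_isUnit_map_of_ker_isNilpotent (hsurj : Function.Surjective f)
    (hf : ∀ x ∈ RingHom.ker f, IsNilpotent x) {r : R} (hr : IsUnit (f r)) : IsUnit r := by
  obtain ⟨s, hs⟩ := hsurj ↑hr.unit⁻¹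
  have isUnit_of_map_eq_one : ∀ a : R, f a = 1 → IsUnit a := fun a ha => by
    have hnil := hf (a - 1) (by rw [RingHom.mem_ker, map_sub, ha, map_one, sub_self])
    simpa using hnil.isUnit_add_one
  obtain ⟨u, hu⟩ := isUnit_of_map_eq_one (r * s) (by rw [map_mul, hs, IsUnit.mul_val_inv])
  obtain ⟨v, hv⟩ := isUnit_of_map_eq_one (s * r) (by rw [map_mul, hs, IsUnit.val_inv_mul])
  refine isUnit_iff_exists_and_exists.mpr ⟨⟨s * ↑u⁻¹, ?_⟩, ⟨↑v⁻¹ * s, ?_⟩⟩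
  · rw [← mul_assoc, ← hu, Units.mul_inv]
  · rw [mul_assoc, ← hv, Units.inv_mul]

theorem stronglyUnitNilClean_iff_of_surjective_of_ker_isNilpotent
    (hsurj : Function.Surjective f) (hf : ∀ x ∈ RingHom.ker f, IsNilpotent x) :
    StronglyUnitNilClean R ↔ StronglyUnitNilClean S := by
  constructor
  · intro h y
    obtain ⟨x, rfl⟩ := hsurj y
    obtain ⟨u, hu⟩ := h x
    refine ⟨Units.map f u, ?_⟩
    simpa only [Units.coe_map, MonoidHom.coe_coe, map_mul] using hu.map f
  · intro h x
    obtain ⟨v, hv⟩ := h (f x)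
    obtain ⟨r, hr⟩ := hsurj v
    have hunit : IsUnit r := isUnit_of_isUnit_map_of_ker_isNilpotent f hsurj hf (hr ▸ v.isUnit)
    refine ⟨hunit.unit, isStronglyNilClean_of_map_of_ker_isNilpotent f hf ?_⟩
    rwa [map_mul, IsUnit.unit_spec, hr]

end RingHom

theorem trivSqZeroExt_stronglyUnitNilClean_iff
    (A : Type*) (M : Type*) [Ring A] [AddCommGroup M] [Module A M]
    [Module Aᵐᵒᵖ M] [SMulCommClass A Aᵐᵒᵖ M] :
    StronglyUnitNilClean (TrivSqZeroExt A M) ↔ StronglyUnitNilClean A := by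
  refine stronglyUnitNilClean_iff_of_surjective_of_ker_isNilpotent
    (TrivSqZeroExt.fstHom ℤ A M).toRingHom TrivSqZeroExt.fst_surjective
    fun x (hx : x.fst = 0) => ⟨2, ?_⟩
  ext <;> simp [sq, hx]
end

section
/- Let n > 1 be a natural number and G a finite group. The group ring (ℤ/nℤ)G is unit-regular if and only if n is squarefree and gcd(n, |G|) = 1. -/
/-!
If `(ℤ/n)[G]` is unit-regular, a central element `a` with `a² = 0` vanishes, since
`a = a u a = u a²`; so `ℤ/n` is reduced and `n` is squarefree. The norm element `N = ∑ g`
satisfies `x N ∈ k N` for all `x`, so `N = N u N = c |G| N` and `|G|` is a unit mod `n`.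

Conversely, by the Chinese remainder theorem `(ℤ/n)[G] ≅ ∏_{p ∣ n} (ℤ/p)[G]`. Each factor is
semisimple by Maschke, hence by Wedderburn–Artin a product of matrix rings over finite division
rings, which are fields. A matrix over a field is `P D Q` with `P, Q` invertible and `D` diagonal,
and a diagonal matrix is unit-regular entrywise.
-/

open Function MonoidAlgebra

def IsUnitRegular {M : Type*} [Monoid M] (a : M) : Prop :=
  ∃ u : Mˣ, a = a * u * a

section IsUnitRegular

variable {M N : Type*} [Monoid M] [Monoid N]

theorem IsUnitRegular.map {F : Type*} [FunLike F M N] [MonoidHomClass F M N] (f : F) {a : M}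
    (ha : IsUnitRegular a) : IsUnitRegular (f a) := by
  obtain ⟨u, hu⟩ := ha
  exact ⟨Units.map (f : M →* N) u, by simpa using congrArg f hu⟩

theorem IsUnitRegular.isUnit_mul_mul {a p q : M} (ha : IsUnitRegular a) (hp : IsUnit p)
    (hq : IsUnit q) : IsUnitRegular (p * a * q) := by
  obtain ⟨u, hu⟩ := ha
  obtain ⟨p, rfl⟩ := hp
  obtain ⟨q, rfl⟩ := hq
  refine ⟨q⁻¹ * u * p⁻¹, ?_⟩
  calc (p : M) * a * q = p * (a * u * a) * q := by rw [← hu]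
    _ = p * a * q * ↑(q⁻¹ * u * p⁻¹) * (p * a * q) := by
      simp only [Units.val_mul, mul_assoc, Units.mul_inv_cancel_left, Units.inv_mul_cancel_left]

theorem Pi.isUnitRegular {ι : Type*} {M : ι → Type*} [∀ i, Monoid (M i)] {a : ∀ i, M i}
    (ha : ∀ i, IsUnitRegular (a i)) : IsUnitRegular a := by
  choose u hu using ha
  exact ⟨MulEquiv.piUnits.symm u, funext hu⟩

theorem GroupWithZero.isUnitRegular {G₀ : Type*} [GroupWithZero G₀] (a : G₀) :
    IsUnitRegular a := by
  rcases eq_or_ne a 0 with rfl | ha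
  · exact ⟨1, by simp⟩
  · exact ⟨(Units.mk0 a ha)⁻¹, by simp [ha]⟩

end IsUnitRegular

theorem Matrix.isUnitRegular {n K : Type*} [Fintype n] [DecidableEq n] [Field K]
    (A : Matrix n n K) : IsUnitRegular A := by
  obtain ⟨L, L', D, rfl⟩ := Matrix.Pivot.exists_list_transvec_mul_diagonal_mul_list_transvec A
  have hL (L : List (TransvectionStruct n K)) : IsUnit (L.map TransvectionStruct.toMatrix).prod :=
    List.prod_isUnit fun _ hm ↦ by
      obtain ⟨t, -, rfl⟩ := List.mem_map.mp hm
      exact (Matrix.isUnit_iff_isUnit_det _).mpr (by simp [t.det])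
  have hD : IsUnitRegular (diagonal D) :=
    (Pi.isUnitRegular fun i ↦ GroupWithZero.isUnitRegular (D i)).map (diagonalRingHom n K)
  exact hD.isUnit_mul_mul (hL L) (hL L')

section UnitRegular

variable {R S : Type*} [Ring R] [Ring S]

theorem UnitRegular.of_surjective (h : UnitRegular R) (f : R →+* S) (hf : Surjective f) :
    UnitRegular S := by
  intro b
  obtain ⟨a, rfl⟩ := hf b
  exact IsUnitRegular.map f (h a)

theorem UnitRegular.isReduced_of_injective {k : Type*} [CommRing k] [Algebra k R]
    (h : UnitRegular R) (hk : Injective (algebraMap k R)) : IsReduced k := by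
  refine (isReduced_iff_pow_one_lt 2 one_lt_two).mpr fun x hx ↦ hk ?_
  obtain ⟨u, hu⟩ := h (algebraMap k R x)
  rw [hu, mul_assoc, ← Algebra.commutes, ← mul_assoc, ← map_mul, ← pow_two, hx]
  simp

end UnitRegular

theorem UnitRegular.pi {ι : Type*} {R : ι → Type*} [∀ i, Ring (R i)]
    (h : ∀ i, UnitRegular (R i)) : UnitRegular (∀ i, R i) :=
  fun a ↦ Pi.isUnitRegular fun i ↦ h i (a i)

theorem UnitRegular.of_isSemisimpleRing_of_finite (R : Type*) [Ring R] [IsSemisimpleRing R]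
    [Finite R] : UnitRegular R := by
  obtain ⟨m, D, d, _, _, ⟨e⟩⟩ := IsSemisimpleRing.exists_ringEquiv_pi_matrix_divisionRing R
  have (i : Fin m) : Finite (D i) :=
    .of_injective (fun x ↦ e.symm (Pi.single i (Matrix.diagonal (const _ x))))
      (e.symm.injective.comp ((Pi.single_injective i).comp
        (Matrix.diagonal_injective.comp const_injective)))
  exact (UnitRegular.pi fun i A ↦ A.isUnitRegular).of_surjective e.symm.toRingHom
    e.symm.surjective

namespace MonoidAlgebra

noncomputable def piRingEquiv {ι : Type*} (k : ι → Type*) [∀ i, Semiring (k i)] (G : Type*)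
    [Monoid G] [Finite G] : MonoidAlgebra (∀ i, k i) G ≃+* ∀ i, MonoidAlgebra (k i) G :=
  .ofBijective (RingHom.pi fun i ↦ mapRingHom G (Pi.evalRingHom k i)) <| by
    refine ⟨fun x y hxy ↦ ?_, fun F ↦ ?_⟩
    · ext g i
      simpa using congr_arg (fun z ↦ (z i).coeff g) hxy
    · refine ⟨ofCoeff (Finsupp.equivFunOnFinite.symm fun g i ↦ (F i).coeff g), ?_⟩
      ext i g
      simp

variable (k G : Type*) [Semiring k] [Group G] [Fintype G]

noncomputable def normElement : MonoidAlgebra k G :=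
  ∑ g : G, single g 1

variable {k G}

theorem single_mul_normElement (g : G) : single g (1 : k) * normElement k G = normElement k G := by
  simp only [normElement, Finset.mul_sum, single_mul_single, one_mul]
  exact Equiv.sum_comp (Equiv.mulLeft g) fun h ↦ single h (1 : k)

theorem exists_mul_normElement_eq_smul (x : MonoidAlgebra k G) :
    ∃ c : k, x * normElement k G = c • normElement k G := by
  induction x using induction_linear with
  | zero => exact ⟨0, by simp⟩
  | add x y hx hy =>
    obtain ⟨c, hc⟩ := hx
    obtain ⟨d, hd⟩ := hy
    exact ⟨c + d, by rw [add_mul, hc, hd, add_smul]⟩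
  | single g c =>
    refine ⟨c, ?_⟩
    rw [show single g c = c • single g (1 : k) by rw [smul_single', mul_one], smul_mul_assoc,
      single_mul_normElement]

theorem normElement_mul_self :
    normElement k G * normElement k G = (Fintype.card G : k) • normElement k G := by
  conv_lhs => enter [1]; rw [normElement]
  simp [Finset.sum_mul, single_mul_normElement, Nat.cast_smul_eq_nsmul]

theorem coeff_normElement_one : (normElement k G).coeff 1 = 1 := by
  simp [normElement, coeff_sum]

end MonoidAlgebra

theorem UnitRegular.isUnit_natCard {k G : Type*} [CommRing k] [Group G] [Finite G]
    (h : UnitRegular (MonoidAlgebra k G)) : IsUnit (Nat.card G : k) := by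
  have := Fintype.ofFinite G
  obtain ⟨u, hu⟩ := h (normElement k G)
  obtain ⟨c, hc⟩ := exists_mul_normElement_eq_smul (u : MonoidAlgebra k G)
  rw [mul_assoc, hc, mul_smul_comm, normElement_mul_self, smul_smul] at hu
  have h1 := congr_arg (fun z ↦ z.coeff 1) hu
  simp only [coeff_smul, Finsupp.smul_apply, coeff_normElement_one, smul_eq_mul, mul_one] at h1
  exact .of_mul_eq_one c (by rw [Nat.card_eq_fintype_card, mul_comm]; exact h1.symm)

noncomputable def ZMod.ringEquivPiOfSquarefree {n : ℕ} (hn : Squarefree n) :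
    ZMod n ≃+* ∀ p : n.primeFactors, ZMod p :=
  (ZMod.ringEquivCongr ((Finset.prod_coe_sort _ fun p ↦ p).trans
    (Nat.prod_primeFactors_of_squarefree hn)).symm).trans
    (ZMod.prodEquivPi _ fun p q hpq ↦ (Nat.coprime_primes (Nat.prime_of_mem_primeFactors p.2)
      (Nat.prime_of_mem_primeFactors q.2)).mpr (Subtype.coe_ne_coe.mpr hpq))

theorem MonoidAlgebra.unitRegular_zmod_of_squarefree {n : ℕ} {G : Type*} [Group G] [Finite G]
    (hn : Squarefree n) (hG : n.Coprime (Nat.card G)) :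
    UnitRegular (MonoidAlgebra (ZMod n) G) := by
  let e := (mapRingEquiv G (ZMod.ringEquivPiOfSquarefree hn)).trans (piRingEquiv _ G)
  refine (UnitRegular.pi fun p ↦ ?_).of_surjective e.symm.toRingHom e.symm.surjective
  have hp := Nat.prime_of_mem_primeFactors p.2
  have : Fact (p : ℕ).Prime := ⟨hp⟩
  have : NeZero (Nat.card G : ZMod p) := ⟨fun h ↦ by
    rw [ZMod.natCast_eq_zero_iff] at h
    exact hp.one_lt.ne' (Nat.eq_one_of_dvd_one
      (hG ▸ Nat.dvd_gcd (Nat.dvd_of_mem_primeFactors p.2) h))⟩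
  have : Finite (MonoidAlgebra (ZMod p) G) := Module.finite_of_finite (ZMod p)
  exact .of_isSemisimpleRing_of_finite _

theorem zmod_monoidAlgebra_unitRegular_iff_of_finite
    (n : ℕ) (hn : 1 < n) (G : Type*) [Group G] [Finite G] :
    UnitRegular (MonoidAlgebra (ZMod n) G) ↔
      Squarefree n ∧ Nat.gcd n (Nat.card G) = 1 := by
  refine ⟨fun h ↦ ⟨?_, ?_⟩, fun ⟨hsq, hG⟩ ↦ unitRegular_zmod_of_squarefree hsq hG⟩
  · have := h.isReduced_of_injective (k := ZMod n) (fun x y hxy ↦ by simpa using hxy)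
    exact (isReduced_zmod.mp this).resolve_right (by omega)
  · exact ((ZMod.isUnit_iff_coprime _ _).mp h.isUnit_natCard).symm
end
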